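/- Let A = (Q, Σ, δ) be a synchronizing automaton with Σ = {a_1, …, a_m}, m = 2^k for some k ≥ 1, and let B(A) = (Q × {0,1}^{≤ k}, {0,1}, δ') be the 2-letter automaton defined by δ'((q, w), x) = (q, wx) if |w| < k; δ'((q, w), 1) = (δ(q, a_{ℓ(w)}), λ) if |w| = k; and δ'((q, w), 0) = (q, w) if |w| = k. If w is a shortest binary word such that the image of the set Q × {λ} under the action of w in B(A) is a single state, then w decomposes as w = w_1 1 w_2 1 ⋯ w_r 1 where each block w_j ∈ {0,1}^k has length exactly k, and the word a_{ℓ(w_1)} a_{ℓ(w_2)} ⋯ a_{ℓ(w_r)} is a reset word for A. -/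

import Mathlib

def wordAct {Q A : Type*} (δ : Q → A → Q) (q : Q) (w : List A) : Q :=
  w.foldl δ q

def IsResetWord {Q A : Type*} (δ : Q → A → Q) (w : List A) : Prop :=
  ∀ p q : Q, wordAct δ p w = wordAct δ q w

def Synchronizing {Q A : Type*} (δ : Q → A → Q) : Prop :=
  ∃ w : List A, IsResetWord δ w

noncomputable def resetThreshold {Q A : Type*} (δ : Q → A → Q) : ℕ :=
  sInf {n : ℕ | ∃ w : List A, w.length = n ∧ IsResetWord δ w}

/-- The value of a binary string read most-significant-bit first.  For strings of a
fixed length `k`, lexicographic order (with `false < true`) agrees with the order of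
`bitVal`, so the lexicographic index `ℓ(w) ∈ {1, …, 2^k}` equals `bitVal w + 1`. -/
def bitVal : List Bool → ℕ
  | [] => 0
  | b :: t => (if b then 1 else 0) * 2 ^ t.length + bitVal t

/-- The length-`k` binary string whose `bitVal` is `n % 2^k`; i.e. `ℓ⁻¹(n+1)` for `n < 2^k`. -/
def bits : ℕ → ℕ → List Bool
  | 0, _ => []
  | k + 1, n => decide (2 ^ k ≤ n % 2 ^ (k + 1)) :: bits k n

/-- The transition function of the 2-letter automaton `B(A)` on `Q × {0,1}^{≤k}`:
if `|w| < k` the letter is appended; if `|w| = k`, letter `1` applies the letter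
`a_{ℓ(w)}` of `A` and resets the string to `λ`, while letter `0` does nothing. -/
def deltaB {Q : Type*} (k : ℕ) (δ : Q → Fin (2 ^ k) → Q) :
    Q × {w : List Bool // w.length ≤ k} → Bool →
      Q × {w : List Bool // w.length ≤ k} :=
  fun s x =>
    if h : s.2.val.length < k then
      (s.1, ⟨s.2.val ++ [x], by simpa using h⟩)
    else if x then
      (δ s.1 ⟨bitVal s.2.val % 2 ^ k, Nat.mod_lt _ (Nat.pow_pos (by norm_num))⟩,
        ⟨[], by simp⟩)
    else s

/-- A word `w` merges the subset `Q × {λ}` of `B(A)`: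
the image of `Q × {λ}` under the action of `w` is a single state. -/
def MergesQLambda {Q : Type*} (k : ℕ) (δ : Q → Fin (2 ^ k) → Q) (w : List Bool) : Prop :=
  ∃ s, ∀ q : Q,
    wordAct (deltaB k δ) (q, ⟨[], by simp⟩) w = s


/-!
The buffer component of a state of `B(A)` evolves independently of its `Q`-component, so all
runs from `Q × {λ}` stay in lockstep. In a shortest merging word, a `0` read on a full buffer is
a no-op and could be deleted, and a trailing incomplete block only fills the buffer and could be
dropped; hence the word is a concatenation of blocks `u 1` with `|u| = k`, each of which acts on
the `Q`-component as the letter `a_{ℓ(u)}`.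
-/

theorem wordAct_append {Q A : Type*} (d : Q → A → Q) (q : Q) (v w : List A) :
    wordAct d q (v ++ w) = wordAct d (wordAct d q v) w :=
  List.foldl_append ..

namespace BlockAutomaton

abbrev Buffer (k : ℕ) := {w : List Bool // w.length ≤ k}

abbrev emptyBuffer (k : ℕ) : Buffer k := ⟨[], Nat.zero_le k⟩

def letter (k : ℕ) (u : List Bool) : Fin (2 ^ k) :=
  ⟨bitVal u % 2 ^ k, Nat.mod_lt _ (Nat.pow_pos (by norm_num))⟩

variable {Q : Type*} {k : ℕ} (δ : Q → Fin (2 ^ k) → Q)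

theorem wordAct_deltaB_of_length_le (q : Q) :
    ∀ (v : List Bool) (b : Buffer k) (h : b.val.length + v.length ≤ k),
      wordAct (deltaB k δ) (q, b) v = (q, ⟨b.val ++ v, by simpa using h⟩)
  | [], b, _ => by simp [wordAct]
  | x :: v, b, h => by
    have hb : b.val.length < k := by simp at h; omega
    have hstep : deltaB k δ (q, b) x = (q, ⟨b.val ++ [x], by simpa using hb⟩) := by
      simp [deltaB, hb]
    change wordAct (deltaB k δ) (deltaB k δ (q, b) x) v = _
    rw [hstep, wordAct_deltaB_of_length_le q v _ (by simp at h ⊢; omega)]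
    simp

theorem wordAct_deltaB_prefix {v : List Bool} (hv : v.length ≤ k) (q : Q) :
    wordAct (deltaB k δ) (q, emptyBuffer k) v = (q, ⟨v, hv⟩) := by
  simpa using wordAct_deltaB_of_length_le δ q v (emptyBuffer k) (by simpa using hv)

theorem wordAct_deltaB_block {u : List Bool} (hu : u.length = k) (q : Q) :
    wordAct (deltaB k δ) (q, emptyBuffer k) (u ++ [true]) = (δ q (letter k u), emptyBuffer k) := by
  rw [wordAct_append, wordAct_deltaB_prefix δ hu.le]
  simp [wordAct, deltaB, hu, letter]

theorem wordAct_deltaB_false {u : List Bool} (hu : u.length = k) (rest : List Bool) (q : Q) :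
    wordAct (deltaB k δ) (q, emptyBuffer k) (u ++ false :: rest) =
      wordAct (deltaB k δ) (q, emptyBuffer k) (u ++ rest) := by
  rw [wordAct_append, wordAct_append, wordAct_deltaB_prefix δ hu.le]
  simp [wordAct, deltaB, hu]

theorem wordAct_deltaB_flatten (q : Q) :
    ∀ ws : List (List Bool), (∀ u ∈ ws, u.length = k) →
      wordAct (deltaB k δ) (q, emptyBuffer k) (ws.map (· ++ [true])).flatten =
        (wordAct δ q (ws.map (letter k)), emptyBuffer k)
  | [], _ => rfl
  | u :: ws, hws => by
    rw [List.map_cons, List.flatten_cons, wordAct_append,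
      wordAct_deltaB_block δ (hws u List.mem_cons_self)]
    exact wordAct_deltaB_flatten _ ws fun v hv => hws v (List.mem_cons_of_mem u hv)

/-- `w` merges `P × {λ}` in `B(A)`. -/
def MergesFrom (P : Set Q) (w : List Bool) : Prop :=
  ∃ s, ∀ q ∈ P, wordAct (deltaB k δ) (q, emptyBuffer k) w = s

def IsShortestMerging (P : Set Q) (w : List Bool) : Prop :=
  MergesFrom δ P w ∧ ∀ w', MergesFrom δ P w' → w.length ≤ w'.length

theorem mergesFrom_univ_iff {w : List Bool} :
    MergesFrom δ Set.univ w ↔ MergesQLambda k δ w := by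
  simp [MergesFrom, MergesQLambda]

theorem mergesFrom_false_iff {P : Set Q} {u : List Bool} (hu : u.length = k)
    (rest : List Bool) :
    MergesFrom δ P (u ++ false :: rest) ↔ MergesFrom δ P (u ++ rest) := by
  simp only [MergesFrom, wordAct_deltaB_false δ hu]

theorem mergesFrom_block_iff {P : Set Q} {u : List Bool} (hu : u.length = k)
    (rest : List Bool) :
    MergesFrom δ P (u ++ true :: rest) ↔ MergesFrom δ ((δ · (letter k u)) '' P) rest := by
  simp only [MergesFrom, Set.forall_mem_image, ← List.singleton_append (l := rest),
    ← List.append_assoc, wordAct_append _ _ (u ++ [true]), wordAct_deltaB_block δ hu]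

namespace IsShortestMerging

variable {δ} {P : Set Q} {w : List Bool}

theorem lt_length_of_ne_nil (hw : IsShortestMerging δ P w) (hne : w ≠ []) : k < w.length := by
  by_contra! hle
  obtain ⟨s, hs⟩ := hw.1
  have hnil : MergesFrom δ P [] := ⟨(s.1, emptyBuffer k), fun q hq => by
    have hq := congrArg Prod.fst (hs q hq)
    rw [wordAct_deltaB_prefix δ hle] at hq
    simp [wordAct, ← hq]⟩
  exact hne (List.eq_nil_of_length_eq_zero (Nat.le_zero.mp (hw.2 [] hnil)))

theorem exists_eq_block_append (hw : IsShortestMerging δ P w) (hlen : k < w.length) :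
    ∃ u rest, u.length = k ∧ w = u ++ true :: rest := by
  obtain ⟨x, rest, hdrop⟩ := List.exists_cons_of_length_pos (l := w.drop k) (by simp; omega)
  obtain ⟨u, hu, rfl⟩ : ∃ u, u.length = k ∧ w = u ++ x :: rest :=
    ⟨w.take k, by simp; omega, by rw [← hdrop, List.take_append_drop]⟩
  cases x
  · have hshorter := hw.2 _ ((mergesFrom_false_iff δ hu rest).1 hw.1)
    simp at hshorter
  · exact ⟨u, rest, hu, rfl⟩

theorem of_block_append {u rest : List Bool} (hu : u.length = k)
    (hw : IsShortestMerging δ P (u ++ true :: rest)) :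
    IsShortestMerging δ ((δ · (letter k u)) '' P) rest := by
  refine ⟨(mergesFrom_block_iff δ hu rest).1 hw.1, fun w' hw' => ?_⟩
  simpa using hw.2 _ ((mergesFrom_block_iff δ hu w').2 hw')

theorem exists_blocks (hw : IsShortestMerging δ P w) :
    ∃ ws : List (List Bool), (∀ u ∈ ws, u.length = k) ∧ w = (ws.map (· ++ [true])).flatten := by
  induction hn : w.length using Nat.strong_induction_on generalizing P w with
  | _ n ih =>
  rcases eq_or_ne w [] with rfl | hne
  · exact ⟨[], by simp, rfl⟩
  obtain ⟨u, rest, hu, rfl⟩ := hw.exists_eq_block_append (hw.lt_length_of_ne_nil hne)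
  obtain ⟨ws, hws, hrest⟩ :=
    ih rest.length (by simp [← hn]; omega) (hw.of_block_append hu) rfl
  refine ⟨u :: ws, ?_, by simp [hrest]⟩
  rintro v (_ | ⟨_, hv⟩)
  exacts [hu, hws v hv]

end IsShortestMerging

theorem isResetWord_of_mergesQLambda_flatten {ws : List (List Bool)}
    (hws : ∀ u ∈ ws, u.length = k) (hmerge : MergesQLambda k δ (ws.map (· ++ [true])).flatten) :
    IsResetWord δ (ws.map (letter k)) := by
  obtain ⟨s, hs⟩ := hmerge
  intro p q
  have hp := (wordAct_deltaB_flatten δ p ws hws).symm.trans (hs p)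
  have hq := (wordAct_deltaB_flatten δ q ws hws).symm.trans (hs q)
  exact congrArg Prod.fst (hp.trans hq.symm)

end BlockAutomaton

open BlockAutomaton in
/-- If `w` is a shortest binary word merging `Q × {λ}` in `B(A)`, then `w` decomposes
as `w = w₁ 1 w₂ 1 ⋯ w_r 1` with each `wⱼ` of length exactly `k`, and the word
`a_{ℓ(w₁)} ⋯ a_{ℓ(w_r)}` is a reset word for `A`. -/
theorem shortest_merging_word_decomposes {Q : Type}
    (k : ℕ) (δ : Q → Fin (2 ^ k) → Q)
    (w : List Bool) (hmerge : MergesQLambda k δ w)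
    (hshort : ∀ w' : List Bool, MergesQLambda k δ w' → w.length ≤ w'.length) :
    ∃ ws : List (List Bool),
      (∀ u ∈ ws, u.length = k) ∧
      w = (ws.map (· ++ [true])).flatten ∧
      IsResetWord δ (ws.map fun u =>
        (⟨bitVal u % 2 ^ k,
          Nat.mod_lt _ (Nat.pow_pos (by norm_num))⟩ : Fin (2 ^ k))) := by
  have hw : IsShortestMerging δ Set.univ w :=
    ⟨(mergesFrom_univ_iff δ).2 hmerge, fun w' hw' => hshort w' ((mergesFrom_univ_iff δ).1 hw')⟩
  obtain ⟨ws, hws, rfl⟩ := hw.exists_blocks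
  exact ⟨ws, hws, rfl, isResetWord_of_mergesQLambda_flatten δ hws hmerge⟩
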